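/- arXiv:2605.27021 — 6 statements merged into one kernel-verified Lean document; each statement's English description precedes it below -/
import Mathlib

section
/- For every state s ∈ S, every action a ∈ A(s), and every function V : S → ℝ, the transformed Bellman residual equals the holding-time-scaled original residual: R̄_θ(s,a) + Σ_{s'∈S} P̄_θ(s'|s,a)·V(s') − V(s) = (θ / L(s,a)) · ( R(s,a) + Σ_{s'∈S} P(s'|s,a)·V(s') − V(s) ). -/
open Finset

/-- Transformed one-step cost `R̄_θ(s,a) = θ·R(s,a)/L(s,a)`. -/
noncomputable def Rbar {S Act : Type*} (R L : S → Act → ℝ) (θ : ℝ) (s : S) (a : Act) : ℝ :=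
  θ * R s a / L s a

/-- Transformed kernel `P̄_θ(s'|s,a)`: `(θ/L(s,a))·P(s'|s,a)` for `s' ≠ s`, and
`1 − θ/L(s,a) + (θ/L(s,a))·P(s|s,a)` for `s' = s`. -/
noncomputable def Pbar {S Act : Type*} [DecidableEq S] (P : S → Act → S → ℝ)
    (L : S → Act → ℝ) (θ : ℝ) (s : S) (a : Act) (s' : S) : ℝ :=
  if s' = s then 1 - θ / L s a + (θ / L s a) * P s a s
  else (θ / L s a) * P s a s'

/-- For every state `s`, action `a ∈ A(s)` and function `V : S → ℝ`, the transformed Bellman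
residual equals the holding-time-scaled original residual. -/
theorem transformed_residual_eq_scaled_residual
    {S Act : Type*} [Fintype S] [DecidableEq S] [Nonempty S]
    (A : S → Finset Act) (hA : ∀ s, (A s).Nonempty)
    (R L : S → Act → ℝ) (P : S → Act → S → ℝ)
    (hL : ∀ s a, a ∈ A s → 0 < L s a)
    (hPnn : ∀ s a, a ∈ A s → ∀ s', 0 ≤ P s a s')
    (hPsum : ∀ s a, a ∈ A s → ∑ s', P s a s' = 1)
    (θ : ℝ) (hθpos : 0 < θ) (hθle : ∀ s a, a ∈ A s → θ ≤ L s a)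
    (s : S) (a : Act) (ha : a ∈ A s) (V : S → ℝ) :
    Rbar R L θ s a + (∑ s', Pbar P L θ s a s' * V s') - V s
      = (θ / L s a) * (R s a + (∑ s', P s a s' * V s') - V s) := by
  have hLne : L s a ≠ 0 := ne_of_gt (hL s a ha)
  have hsum : (∑ s', Pbar P L θ s a s' * V s')
      = (1 - θ / L s a) * V s + (θ / L s a) * ∑ s', P s a s' * V s' := by
    have : ∀ s', Pbar P L θ s a s' * V s'
        = (if s' = s then (1 - θ / L s a) * V s else 0) + (θ / L s a) * (P s a s' * V s') := by
      intro s'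
      by_cases h : s' = s <;> simp [Pbar, h] <;> ring
    rw [Finset.sum_congr rfl fun s' _ => this s', Finset.sum_add_distrib,
      Finset.sum_ite_eq' Finset.univ s, ← Finset.mul_sum]
    simp
  rw [hsum, Rbar]
  field_simp
  ring
end

section
/- For every ρ ∈ ℝ and every V : S → ℝ, the following are equivalent: (i) for every state s, V(s) = min_{a ∈ A(s)} [ R̄_θ(s,a) − θ·ρ + Σ_{s'∈S} P̄_θ(s'|s,a)·V(s') ] (the average-cost optimality equation of the transformed MDP with average cost θ·ρ); (ii) for every state s, ρ = min_{a ∈ A(s)} ( R(s,a) + Σ_{s'∈S} P(s'|s,a)·V(s') − V(s) ) / L(s,a) (the ratio-form optimality equation of the original semi-Markov decision process with average cost ρ). -/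
open Finset

/-- The average-cost optimality equation of the transformed MDP (with average cost `θ·ρ`)
holds iff the ratio-form optimality equation of the original SMDP (with average cost `ρ`)
holds. -/
theorem transformed_acoe_iff_smdp_ratio_acoe
    {S Act : Type*} [Fintype S] [DecidableEq S] [Nonempty S]
    (A : S → Finset Act) (hA : ∀ s, (A s).Nonempty)
    (R L : S → Act → ℝ) (P : S → Act → S → ℝ)
    (hL : ∀ s a, a ∈ A s → 0 < L s a)
    (hPnn : ∀ s a, a ∈ A s → ∀ s', 0 ≤ P s a s')
    (hPsum : ∀ s a, a ∈ A s → ∑ s', P s a s' = 1)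
    (θ : ℝ) (hθpos : 0 < θ) (hθle : ∀ s a, a ∈ A s → θ ≤ L s a)
    (ρ : ℝ) (V : S → ℝ) :
    (∀ s : S, V s = (A s).inf' (hA s) (fun a =>
        Rbar R L θ s a - θ * ρ + ∑ s', Pbar P L θ s a s' * V s'))
      ↔
    (∀ s : S, ρ = (A s).inf' (hA s) (fun a =>
        (R s a + (∑ s', P s a s' * V s') - V s) / L s a)) := by
  have key : ∀ s : S,
      (A s).inf' (hA s) (fun a =>
        Rbar R L θ s a - θ * ρ + ∑ s', Pbar P L θ s a s' * V s')
      = V s - θ * ρ + θ * (A s).inf' (hA s) (fun a =>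
        (R s a + (∑ s', P s a s' * V s') - V s) / L s a) := by
    intro s
    have hmono : Monotone (fun x : ℝ => V s - θ * ρ + θ * x) :=
      fun x y hxy => by
        dsimp only
        have := mul_le_mul_of_nonneg_left hxy hθpos.le
        linarith
    have hcomp : V s - θ * ρ + θ * (A s).inf' (hA s) (fun a =>
          (R s a + (∑ s', P s a s' * V s') - V s) / L s a)
        = (A s).inf' (hA s) (fun a =>
          V s - θ * ρ + θ * ((R s a + (∑ s', P s a s' * V s') - V s) / L s a)) :=
      Finset.apply_inf'_eq_inf'_comp (hA s)
        (f := fun a => (R s a + (∑ s', P s a s' * V s') - V s) / L s a)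
        (fun x : ℝ => V s - θ * ρ + θ * x) (fun x y => hmono.map_min)
    rw [hcomp]
    apply Finset.inf'_congr _ rfl
    intro a ha
    have hLpos := hL s a ha
    have hLne : L s a ≠ 0 := ne_of_gt hLpos
    simp only [Rbar]
    have hsum : ∑ s', Pbar P L θ s a s' * V s'
        = (θ / L s a) * (∑ s', P s a s' * V s') + (1 - θ / L s a) * V s := by
      have : ∀ s' : S, Pbar P L θ s a s' * V s'
          = (θ / L s a) * (P s a s' * V s') + (if s' = s then (1 - θ / L s a) * V s else 0) := by
        intro s'
        by_cases h : s' = s <;> simp [Pbar, h] <;> ring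
      rw [Finset.sum_congr rfl (fun s' _ => this s'), Finset.sum_add_distrib,
        ← Finset.mul_sum, Finset.sum_ite_eq' Finset.univ s (fun _ => (1 - θ / L s a) * V s)]
      simp
    rw [hsum]
    field_simp
    ring
  constructor
  · intro h s
    have hs := h s
    rw [key s] at hs
    have : θ * ρ = θ * (A s).inf' (hA s) (fun a =>
        (R s a + (∑ s', P s a s' * V s') - V s) / L s a) := by linarith
    exact mul_left_cancel₀ (ne_of_gt hθpos) this
  · intro h s
    rw [key s, ← h s]
    ring
end

section
/- For every V : S → ℝ and every state s ∈ S, the set of actions minimizing the transformed action value coincides with the set of actions minimizing the semi-Markov ratio: { a ∈ A(s) : a minimizes R̄_θ(s,a) + Σ_{s'∈S} P̄_θ(s'|s,a)·V(s') over A(s) } = { a ∈ A(s) : a minimizes ( R(s,a) + Σ_{s'∈S} P(s'|s,a)·V(s') − V(s) ) / L(s,a) over A(s) }. In particular, the SMDP-to-MDP transformation preserves greedy (hence stationary optimal) action choices. -/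
open Finset

/-- The set of actions minimizing the transformed action value coincides with the set of
actions minimizing the semi-Markov ratio: the SMDP-to-MDP transformation preserves greedy
(hence stationary optimal) action choices. -/
theorem transformed_argmin_eq_ratio_argmin
    {S Act : Type*} [Fintype S] [DecidableEq S] [Nonempty S]
    (A : S → Finset Act) (hA : ∀ s, (A s).Nonempty)
    (R L : S → Act → ℝ) (P : S → Act → S → ℝ)
    (hL : ∀ s a, a ∈ A s → 0 < L s a)
    (hPnn : ∀ s a, a ∈ A s → ∀ s', 0 ≤ P s a s')
    (hPsum : ∀ s a, a ∈ A s → ∑ s', P s a s' = 1)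
    (θ : ℝ) (hθpos : 0 < θ) (hθle : ∀ s a, a ∈ A s → θ ≤ L s a)
    (V : S → ℝ) (s : S) :
    {a : Act | a ∈ A s ∧ ∀ b ∈ A s,
        Rbar R L θ s a + (∑ s', Pbar P L θ s a s' * V s')
          ≤ Rbar R L θ s b + (∑ s', Pbar P L θ s b s' * V s')}
      =
    {a : Act | a ∈ A s ∧ ∀ b ∈ A s,
        (R s a + (∑ s', P s a s' * V s') - V s) / L s a
          ≤ (R s b + (∑ s', P s b s' * V s') - V s) / L s b} := by
  have key : ∀ a ∈ A s,
      Rbar R L θ s a + (∑ s', Pbar P L θ s a s' * V s')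
        = V s + θ * ((R s a + (∑ s', P s a s' * V s') - V s) / L s a) := by
    intro a ha
    have hLpos := hL s a ha
    have hLne : L s a ≠ 0 := ne_of_gt hLpos
    have hsum : (∑ s', Pbar P L θ s a s' * V s')
        = (θ / L s a) * (∑ s', P s a s' * V s') + (1 - θ / L s a) * V s := by
      rw [Finset.mul_sum]
      rw [← Finset.sum_erase_add _ _ (Finset.mem_univ s),
          ← Finset.sum_erase_add _ _ (Finset.mem_univ s)]
      have h1 : ∀ s' ∈ Finset.univ.erase s,
          Pbar P L θ s a s' * V s' = θ / L s a * (P s a s' * V s') := by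
        intro s' hs'
        have : s' ≠ s := Finset.ne_of_mem_erase hs'
        simp [Pbar, this, mul_assoc]
      rw [Finset.sum_congr rfl h1]
      simp [Pbar]
      ring
    rw [hsum, Rbar]
    field_simp
    ring
  ext a
  simp only [Set.mem_setOf_eq]
  constructor
  · rintro ⟨ha, h⟩
    refine ⟨ha, fun b hb => ?_⟩
    have := h b hb
    rw [key a ha, key b hb] at this
    exact le_of_mul_le_mul_left (by linarith) hθpos
  · rintro ⟨ha, h⟩
    refine ⟨ha, fun b hb => ?_⟩
    rw [key a ha, key b hb]
    have := h b hb
    nlinarith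
end

section
/- The Bellman backup operator preserves monotonicity in the age: if v : {1,…,Δ̂} × M → ℝ satisfies, for every mode m ∈ M, that the map Δ ↦ v(Δ, m) is nondecreasing on {1,…,Δ̂}, then for every mode m the map Δ ↦ (Bv)(Δ, m) is also nondecreasing on {1,…,Δ̂}. -/
open Finset

/-- Bellman backup of the contact-constrained hybrid inference model:
`(Bv)(Δ,m) = min_{a∈A(m)} [ Σ_{i=0}^{L_a−1} min(Δ+i,Δ̂) − ρ·L_a
  + (1−p_a)·v(min(Δ+L_a,Δ̂), f(m,a)) + p_a·v(ξ_a(m), f(m,a)) ]`. -/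
noncomputable def bellmanBackup {M Act : Type*}
    (Δcap : ℕ) (A : M → Finset Act) (hA : ∀ m, (A m).Nonempty)
    (Ldur : Act → ℕ) (p : Act → ℝ) (ξ : M → Act → ℕ) (f : M → Act → M) (ρ : ℝ)
    (v : ℕ → M → ℝ) (Δ : ℕ) (m : M) : ℝ :=
  (A m).inf' (hA m) (fun a =>
    ((∑ i ∈ Finset.range (Ldur a), min (Δ + i) Δcap : ℕ) : ℝ) - ρ * (Ldur a : ℝ)
      + (1 - p a) * v (min (Δ + Ldur a) Δcap) (f m a)
      + p a * v (ξ m a) (f m a))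

/-- The Bellman backup operator preserves monotonicity in the age: if `Δ ↦ v(Δ,m)` is
nondecreasing on `{1,…,Δ̂}` for every mode `m`, then so is `Δ ↦ (Bv)(Δ,m)`. -/
theorem bellmanBackup_preserves_age_monotone
    {M Act : Type*} [Fintype M]
    (Δcap : ℕ) (hΔcap : 1 ≤ Δcap)
    (A : M → Finset Act) (hA : ∀ m, (A m).Nonempty)
    (Ldur : Act → ℕ) (hL : ∀ m, ∀ a ∈ A m, 1 ≤ Ldur a)
    (p : Act → ℝ) (hp0 : ∀ m, ∀ a ∈ A m, 0 ≤ p a) (hp1 : ∀ m, ∀ a ∈ A m, p a ≤ 1)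
    (ξ : M → Act → ℕ)
    (hξ1 : ∀ m, ∀ a ∈ A m, 1 ≤ ξ m a) (hξcap : ∀ m, ∀ a ∈ A m, ξ m a ≤ Δcap)
    (f : M → Act → M) (ρ : ℝ)
    (v : ℕ → M → ℝ)
    (hv : ∀ m : M, ∀ Δ₁ Δ₂ : ℕ, 1 ≤ Δ₁ → Δ₁ ≤ Δ₂ → Δ₂ ≤ Δcap → v Δ₁ m ≤ v Δ₂ m) :
    ∀ m : M, ∀ Δ₁ Δ₂ : ℕ, 1 ≤ Δ₁ → Δ₁ ≤ Δ₂ → Δ₂ ≤ Δcap →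
      bellmanBackup Δcap A hA Ldur p ξ f ρ v Δ₁ m
        ≤ bellmanBackup Δcap A hA Ldur p ξ f ρ v Δ₂ m := by
  intro m Δ₁ Δ₂ h1 h12 h2
  unfold bellmanBackup
  apply Finset.le_inf'
  intro a ha
  refine le_trans (Finset.inf'_le _ ha) ?_
  gcongr
  · linarith [hp1 m a ha]
  · exact hv (f m a) _ _
      (le_min (le_trans h1 (Nat.le_add_right _ _)) hΔcap)
      (min_le_min (Nat.add_le_add_right h12 _) le_rfl)
      (min_le_right _ _)
end

section
/- Every iterate of (normalized) value iteration is monotone in the age: let V_0 : {1,…,Δ̂} × M → ℝ satisfy, for every mode m, that Δ ↦ V_0(Δ,m) is nondecreasing on {1,…,Δ̂} (e.g., V_0 ≡ 0), and define inductively V_{k+1}(Δ,m) = (B V_k)(Δ,m) − c_k, where c_k ∈ ℝ is an arbitrary normalization constant (e.g., the backup value at a fixed reference state). Then for every k ≥ 0 and every mode m ∈ M, the map Δ ↦ V_k(Δ, m) is nondecreasing on {1,…,Δ̂}. -/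
open Finset

/-- Every iterate of (normalized) value iteration is monotone in the age: if the initial
value `V 0` is nondecreasing in the age for every mode, and
`V (k+1) (Δ,m) = (B (V k))(Δ,m) − c k` for arbitrary normalization constants `c k`, then
every iterate `V k` is nondecreasing in the age for every mode. -/
theorem rvi_iterates_age_monotone
    {M Act : Type*} [Fintype M]
    (Δcap : ℕ) (hΔcap : 1 ≤ Δcap)
    (A : M → Finset Act) (hA : ∀ m, (A m).Nonempty)
    (Ldur : Act → ℕ) (hL : ∀ m, ∀ a ∈ A m, 1 ≤ Ldur a)
    (p : Act → ℝ) (hp0 : ∀ m, ∀ a ∈ A m, 0 ≤ p a) (hp1 : ∀ m, ∀ a ∈ A m, p a ≤ 1)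
    (ξ : M → Act → ℕ)
    (hξ1 : ∀ m, ∀ a ∈ A m, 1 ≤ ξ m a) (hξcap : ∀ m, ∀ a ∈ A m, ξ m a ≤ Δcap)
    (f : M → Act → M) (ρ : ℝ)
    (V : ℕ → ℕ → M → ℝ) (c : ℕ → ℝ)
    (hV0 : ∀ m : M, ∀ Δ₁ Δ₂ : ℕ, 1 ≤ Δ₁ → Δ₁ ≤ Δ₂ → Δ₂ ≤ Δcap → V 0 Δ₁ m ≤ V 0 Δ₂ m)
    (hVsucc : ∀ k : ℕ, ∀ Δ : ℕ, ∀ m : M,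
      V (k + 1) Δ m = bellmanBackup Δcap A hA Ldur p ξ f ρ (V k) Δ m - c k) :
    ∀ k : ℕ, ∀ m : M, ∀ Δ₁ Δ₂ : ℕ, 1 ≤ Δ₁ → Δ₁ ≤ Δ₂ → Δ₂ ≤ Δcap →
      V k Δ₁ m ≤ V k Δ₂ m := by
  intro k
  induction k with
  | zero => exact hV0
  | succ k ih =>
    intro m Δ₁ Δ₂ h1 h12 h2
    rw [hVsucc, hVsucc]
    apply sub_le_sub_right
    unfold bellmanBackup
    apply Finset.le_inf'
    intro a ha
    refine le_trans (Finset.inf'_le _ ha) ?_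
    have hsum : (∑ i ∈ Finset.range (Ldur a), min (Δ₁ + i) Δcap)
        ≤ ∑ i ∈ Finset.range (Ldur a), min (Δ₂ + i) Δcap := by
      apply Finset.sum_le_sum
      intro i _
      exact min_le_min (Nat.add_le_add_right h12 i) le_rfl
    have hv : V k (min (Δ₁ + Ldur a) Δcap) (f m a)
        ≤ V k (min (Δ₂ + Ldur a) Δcap) (f m a) := by
      apply ih
      · exact le_min (le_trans h1 (Nat.le_add_right _ _)) hΔcap
      · exact min_le_min (Nat.add_le_add_right h12 _) le_rfl
      · exact min_le_right _ _
    have h1p : (0:ℝ) ≤ 1 - p a := by linarith [hp1 m a ha]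
    have := mul_le_mul_of_nonneg_left hv h1p
    have hcast : ((∑ i ∈ Finset.range (Ldur a), min (Δ₁ + i) Δcap : ℕ) : ℝ)
        ≤ ((∑ i ∈ Finset.range (Ldur a), min (Δ₂ + i) Δcap : ℕ) : ℝ) := by
      exact_mod_cast hsum
    linarith
end

section
/- Cache-age threshold between transmission and recomputation: there exists an integer threshold τ* ∈ {−1, 0, 1, …, Δ̂} such that for every cache age τ ∈ {0,…,Δ̂}, D(τ) ≤ 0 if and only if τ ≤ τ*. Equivalently, the set {τ ∈ {0,…,Δ̂} : D(τ) ≤ 0} of cache ages at which cached semantic transmission is (weakly) preferred to onboard recomputation is a downward-closed prefix interval of the cache-age axis (possibly empty, corresponding to τ* = −1). -/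
open Finset

/-- Action value of transmitting the cached semantic summary when the cache age is `τ`. -/
noncomputable def Qtx {M : Type*} (Δcap LT : ℕ) (pT ρ : ℝ) (Δ : ℕ) (mT : M)
    (V : ℕ → M → ℝ) (τ : ℕ) : ℝ :=
  ((∑ i ∈ Finset.range LT, min (Δ + i) Δcap : ℕ) : ℝ) - ρ * (LT : ℝ)
    + (1 - pT) * V (min (Δ + LT) Δcap) mT
    + pT * V (min (τ + LT) Δcap) mT

/-- Action value of onboard recomputation (independent of the cache age). -/
noncomputable def Qcomp {M : Type*} (Δcap LC : ℕ) (ρ : ℝ) (Δ : ℕ) (mC : M)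
    (V : ℕ → M → ℝ) : ℝ :=
  ((∑ i ∈ Finset.range LC, min (Δ + i) Δcap : ℕ) : ℝ) - ρ * (LC : ℝ)
    + V (min (Δ + LC) Δcap) mC

/-- Cache-age threshold between transmission and recomputation: there is a (possibly
degenerate) threshold `τ* ∈ {−1,0,…,Δ̂}` such that cached semantic transmission is weakly
preferred to onboard recomputation (`D(τ) ≤ 0`) exactly for cache ages `τ ≤ τ*`; i.e.,
`{τ ∈ {0,…,Δ̂} : D(τ) ≤ 0}` is a downward-closed prefix interval (possibly empty). -/
theorem tx_vs_compute_cache_age_threshold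
    {M : Type*} [Fintype M]
    (Δcap : ℕ) (hΔcap : 1 ≤ Δcap)
    (LT LC : ℕ) (hLT : 1 ≤ LT) (hLC : 1 ≤ LC)
    (pT : ℝ) (hpT0 : 0 ≤ pT) (hpT1 : pT ≤ 1) (ρ : ℝ)
    (Δ : ℕ) (hΔ1 : 1 ≤ Δ) (hΔcap' : Δ ≤ Δcap)
    (mT mC : M) (V : ℕ → M → ℝ)
    (hV : ∀ m : M, ∀ Δ₁ Δ₂ : ℕ, 1 ≤ Δ₁ → Δ₁ ≤ Δ₂ → Δ₂ ≤ Δcap → V Δ₁ m ≤ V Δ₂ m) :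
    ∃ τstar : ℤ, -1 ≤ τstar ∧ τstar ≤ (Δcap : ℤ) ∧
      ∀ τ : ℕ, τ ≤ Δcap →
        (Qtx Δcap LT pT ρ Δ mT V τ - Qcomp Δcap LC ρ Δ mC V ≤ 0 ↔ (τ : ℤ) ≤ τstar) := by
  classical
  set g : ℕ → ℝ := fun τ => Qtx Δcap LT pT ρ Δ mT V τ - Qcomp Δcap LC ρ Δ mC V with hg
  have hmono : ∀ τ₁ τ₂ : ℕ, τ₁ ≤ τ₂ → g τ₁ ≤ g τ₂ := by
    intro τ₁ τ₂ h
    have hVle : V (min (τ₁ + LT) Δcap) mT ≤ V (min (τ₂ + LT) Δcap) mT := by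
      apply hV
      · exact le_min (le_add_left hLT) hΔcap
      · exact min_le_min (by omega) le_rfl
      · exact min_le_right _ _
    simp only [hg, Qtx, Qcomp]
    have := mul_le_mul_of_nonneg_left hVle hpT0
    linarith
  by_cases h0 : g 0 ≤ 0
  · set S : Finset ℕ := (Finset.range (Δcap + 1)).filter (fun τ => g τ ≤ 0) with hS
    have hne : S.Nonempty := ⟨0, by simp [hS, h0]⟩
    refine ⟨(S.max' hne : ℕ), by exact le_trans (by norm_num) (Int.ofNat_nonneg _), ?_, ?_⟩
    · have hm := Finset.mem_range.mp (Finset.mem_filter.mp (S.max'_mem hne)).1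
      have : S.max' hne ≤ Δcap := by omega
      exact_mod_cast this
    · intro τ hτ
      constructor
      · intro hle
        have : τ ∈ S := by simp [hS, Finset.mem_range]; exact ⟨by omega, hle⟩
        exact_mod_cast S.le_max' τ this
      · intro hle
        have hle' : τ ≤ S.max' hne := by exact_mod_cast hle
        exact le_trans (hmono τ _ hle') (Finset.mem_filter.mp (S.max'_mem hne)).2
  · refine ⟨-1, le_rfl, by omega, ?_⟩
    intro τ hτ
    constructor
    · intro hle
      exact absurd (le_trans (hmono 0 τ (Nat.zero_le τ)) hle) h0
    · intro hle; omega
end
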